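/- Change of basis between lines (Lemma 2.2(a)): if ℓ = {i, j, i*j} and ℓ' = {i, k, i*k} are two distinct Fano lines through i, then E_i^{ℓ,k} = (1/2)(E_i^{ℓ',j} + F_i^{ℓ'}) and F_i^{ℓ} = (1/2)(3·E_i^{ℓ',j} − F_i^{ℓ'}); equivalently, the column vector (E_i^{ℓ,k}, F_i^ℓ) equals P·(E_i^{ℓ',j}, F_i^{ℓ'}) with P = (1/2)[[1,1],[3,−1]]. -/

import Mathlib

noncomputable section

/-- Offset function for the octonion multiplication table: for distinct indices
`i, j` (in `ZMod 7`) with `d = j - i`, `eᵢ eⱼ = ± e_{i + octOff d}`.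
It encodes the rules `eᵢe_{i+1} = e_{i+3}`, `e_{i+1}e_{i+3} = eᵢ`,
`e_{i+3}eᵢ = e_{i+1}` (indices modulo 7). -/
def octOff : ZMod 7 → ZMod 7 := fun d =>
  if d = 1 then 3 else if d = 2 then 6 else if d = 3 then 1
  else if d = 4 then 5 else if d = 5 then 4 else if d = 6 then 2 else 0

/-- Sign in `eᵢ eⱼ = octSgn (j - i) • e_{i*j}` for distinct `i, j`. -/
def octSgn : ZMod 7 → ℝ := fun d => if d = 1 ∨ d = 2 ∨ d = 4 then 1 else -1

/-- The real octonion division algebra: a scalar part and seven imaginary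
coordinates (indexed by `ZMod 7`; index `i` stands for the unit `eᵢ`,
with `e₀ = e₇`). -/
def Oct : Type := ℝ × (ZMod 7 → ℝ)

instance : AddCommGroup Oct := inferInstanceAs (AddCommGroup (ℝ × (ZMod 7 → ℝ)))
instance : Module ℝ Oct := inferInstanceAs (Module ℝ (ℝ × (ZMod 7 → ℝ)))

/-- View an octonion as a pair. -/
def oc (x : Oct) : ℝ × (ZMod 7 → ℝ) := x
/-- Build an octonion from a pair. -/
def om (p : ℝ × (ZMod 7 → ℝ)) : Oct := p

/-- The octonion multiplication: `e₀ = 1` is the unit, `eᵢ² = -1` and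
`eᵢe_{i+1} = e_{i+3} = -e_{i+1}eᵢ` for the imaginary units (indices mod 7). -/
instance : Mul Oct :=
  ⟨fun x y => om
    ((oc x).1 * (oc y).1 - ∑ i : ZMod 7, (oc x).2 i * (oc y).2 i,
     fun k => (oc x).1 * (oc y).2 k + (oc y).1 * (oc x).2 k +
       ∑ i : ZMod 7, ∑ j : ZMod 7,
         (if i ≠ j ∧ k = i + octOff (j - i) then octSgn (j - i) else 0)
           * (oc x).2 i * (oc y).2 j)⟩

instance : One Oct := ⟨om (1, 0)⟩

/-- The imaginary basis units `eᵢ`, `i ∈ ZMod 7` (`e₀ = e₇`). -/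
def e (i : ZMod 7) : Oct := om (0, Pi.single i 1)

/-- For distinct `i, j`, `idx i j = i*j` is the index with `gᵢ + gⱼ = g_{i*j}`,
i.e. `eᵢeⱼ = ± e_{idx i j}`. -/
def idx (i j : ZMod 7) : ZMod 7 := i + octOff (j - i)

/-- A linear endomorphism of the octonions is a derivation. -/
def IsOctDer (d : Oct →ₗ[ℝ] Oct) : Prop := ∀ x y : Oct, d (x * y) = d x * y + x * d y

/-- The quaternion subalgebra `Q_ℓ = ⟨1, eᵢ, eⱼ, e_{i*j}⟩` attached to the
Fano line `ℓ = {i, j, i*j}`. -/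
def Qline (i j : ZMod 7) : Submodule ℝ Oct :=
  Submodule.span ℝ ({1, e i, e j, e (idx i j)} : Set Oct)

/-- `isE i k Q E` says that `E = E_i^{ℓ,k}` : `E(q) = 0` and
`E(q·e_k) = (1/2)(eᵢq)e_k` for all `q ∈ Q = Q_ℓ`. -/
def isE (i k : ZMod 7) (Q : Submodule ℝ Oct) (E : Oct →ₗ[ℝ] Oct) : Prop :=
  ∀ q ∈ Q, E q = 0 ∧ E (q * e k) = (1/2 : ℝ) • ((e i * q) * e k)

/-- `isF i k Q F` says that `F = F_i^{ℓ,k}` : `F(q) = (1/2)[eᵢ, q]` and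
`F(q·e_k) = −(1/2)(q·eᵢ)e_k` for all `q ∈ Q = Q_ℓ`. -/
def isF (i k : ZMod 7) (Q : Submodule ℝ Oct) (F : Oct →ₗ[ℝ] Oct) : Prop :=
  ∀ q ∈ Q, F q = (1/2 : ℝ) • (e i * q - q * e i) ∧
    F (q * e k) = -((1/2 : ℝ) • ((q * e i) * e k))

end

/-!
Both sides are linear, so it suffices to compare them on the frame
`1, eᵢ, eⱼ, eᵢeⱼ, e_k, eᵢe_k, eⱼe_k, (eᵢeⱼ)e_k`, which is the basis up to signs.
The frame is `Q_ℓ ∪ Q_ℓ·e_k`, where `E_i^{ℓ,k}` and `F_i^ℓ` are prescribed, and, since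
`eⱼe_k = -e_keⱼ` and `(eᵢeⱼ)e_k = -(eᵢe_k)eⱼ` for `k` off the line `{i, j, i*j}`, it is also
`Q_{ℓ'} ∪ Q_{ℓ'}·e_j` up to signs, where `E_i^{ℓ',j}` and `F_i^{ℓ'}` are prescribed.
Besides these two relations the comparison only uses `eₐ² = -1`, `eₐe_b = -e_beₐ`,
`eₐ(eₐe_b) = -e_b` and `(eₐe_b)eₐ = e_b`, each a sign identity of the multiplication table.
-/

namespace Oct

lemma one_def : (1 : Oct) = om (1, 0) := rfl

instance : MulOneClass Oct where
  one_mul x := by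
    show om _ = x
    refine Prod.ext ?_ (funext fun c => ?_) <;> simp [om, oc, one_def]
  mul_one x := by
    show om _ = x
    refine Prod.ext ?_ (funext fun c => ?_) <;> simp [om, oc, one_def]

instance : IsScalarTower ℝ Oct Oct where
  smul_assoc r x y := by
    refine Prod.ext ?_ (funext fun c => ?_)
    · show r * (oc x).1 * (oc y).1 - ∑ i, r * (oc x).2 i * (oc y).2 i = r * (_ - _)
      simp only [mul_sub, Finset.mul_sum, mul_assoc]
    · show r * (oc x).1 * _ + _ * (r * (oc x).2 c) + ∑ i, ∑ j, _ * (r * (oc x).2 i) * _ =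
        r * (_ + _ + _)
      simp only [mul_add, Finset.mul_sum]
      ring_nf

instance : SMulCommClass ℝ Oct Oct where
  smul_comm r x y := by
    refine Prod.ext ?_ (funext fun c => ?_)
    · show r * (_ - _) = (oc x).1 * (r * (oc y).1) - ∑ i, (oc x).2 i * (r * (oc y).2 i)
      simp only [mul_sub, Finset.mul_sum]
      ring_nf
    · show r * (_ + _ + _) = (oc x).1 * (r * (oc y).2 c) + r * (oc y).1 * _ +
        ∑ i, ∑ j, _ * _ * (r * (oc y).2 j)
      simp only [mul_add, Finset.mul_sum]
      ring_nf

instance : HasDistribNeg Oct where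
  neg_mul x y := by rw [← neg_one_smul ℝ x, smul_mul_assoc, neg_one_smul]
  mul_neg x y := by rw [← neg_one_smul ℝ y, mul_smul_comm, neg_one_smul]

lemma linearMap_ext {M N : Oct →ₗ[ℝ] Oct} (h1 : M 1 = N 1) (he : ∀ a, M (e a) = N (e a)) :
    M = N := by
  refine @LinearMap.prod_ext ℝ ℝ (ZMod 7 → ℝ) Oct _ _ _ _ _ _ _ M N
    (LinearMap.ext_ring h1) (LinearMap.pi_ext' fun a => LinearMap.ext_ring (he a))

end Oct

/-- `octSgn (b - a)` with values in `ℤ`, so that sign identities are decidable. -/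
def mulSign (a b : ZMod 7) : ℤ := if b - a = 1 ∨ b - a = 2 ∨ b - a = 4 then 1 else -1

lemma octSgn_sub (a b : ZMod 7) : octSgn (b - a) = mulSign a b := by
  unfold octSgn mulSign; split <;> simp

lemma e_mul_e_of_ne {a b : ZMod 7} (h : a ≠ b) :
    e a * e b = (mulSign a b : ℝ) • e (idx a b) := by
  rw [← octSgn_sub]
  show om _ = om (_, _)
  refine Prod.ext ?_ (funext fun c => ?_)
  · simp [om, oc, e, Pi.single_apply, Ne.symm h]
  · show _ = octSgn (b - a) * _
    simp [om, oc, e, idx, Pi.single_apply, mul_ite, ite_and, h]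

lemma e_mul_self (a : ZMod 7) : e a * e a = -1 := by
  show om _ = om (-1, -0)
  refine Prod.ext ?_ (funext fun c => ?_) <;> simp [om, oc, e, Pi.single_apply]

lemma idx_ne_left : ∀ {a b : ZMod 7}, a ≠ b → idx a b ≠ a := by decide
lemma idx_comm : ∀ {a b : ZMod 7}, a ≠ b → idx b a = idx a b := by decide
lemma idx_idx_left : ∀ {a b : ZMod 7}, a ≠ b → idx a (idx a b) = b := by decide
lemma mulSign_swap : ∀ {a b : ZMod 7}, a ≠ b → mulSign b a = -mulSign a b := by decide
lemma mulSign_mul_mulSign_idx : ∀ {a b : ZMod 7}, a ≠ b →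
    mulSign a b * mulSign a (idx a b) = -1 := by decide
lemma mulSign_mul_self (a b : ZMod 7) : mulSign a b * mulSign a b = 1 := by
  revert a b; decide

lemma idx_ne_of_not_mem_line : ∀ {i j k : ZMod 7}, i ≠ j → k ≠ i → k ≠ j → k ≠ idx i j →
    idx i k ≠ j := by decide
lemma idx_idx_swap : ∀ {i j k : ZMod 7}, i ≠ j → k ≠ i → k ≠ j → k ≠ idx i j →
    idx (idx i k) j = idx (idx i j) k := by decide
lemma mulSign_mul_mulSign_swap : ∀ {i j k : ZMod 7}, i ≠ j → k ≠ i → k ≠ j → k ≠ idx i j →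
    mulSign i j * mulSign (idx i j) k = -(mulSign i k * mulSign (idx i k) j) := by decide
lemma eq_or_eq_of_not_mem_line : ∀ {i j k : ZMod 7}, i ≠ j → k ≠ i → k ≠ j → k ≠ idx i j →
    ∀ a, a = i ∨ a = j ∨ a = idx i j ∨ a = k ∨ a = idx i k ∨ a = idx j k ∨
      a = idx (idx i j) k := by decide

lemma e_idx {a b : ZMod 7} (h : a ≠ b) :
    e (idx a b) = (mulSign a b : ℝ) • (e a * e b) := by
  rw [e_mul_e_of_ne h, smul_smul, ← Int.cast_mul, mulSign_mul_self, Int.cast_one, one_smul]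

lemma e_mul_e_anticomm {a b : ZMod 7} (h : a ≠ b) : e a * e b = -(e b * e a) := by
  rw [e_mul_e_of_ne h, e_mul_e_of_ne h.symm, idx_comm h, mulSign_swap h, Int.cast_neg, neg_smul,
    neg_neg]

lemma e_mul_e_mul_e_same_left (a b : ZMod 7) : e a * (e a * e b) = -e b := by
  obtain rfl | h := eq_or_ne a b
  · rw [e_mul_self, mul_neg, mul_one]
  · rw [e_mul_e_of_ne h, mul_smul_comm, e_mul_e_of_ne (idx_ne_left h).symm, idx_idx_left h,
      smul_smul, ← Int.cast_mul, mulSign_mul_mulSign_idx h, Int.cast_neg, Int.cast_one,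
      neg_one_smul]

lemma e_mul_e_mul_e_same_outer {a b : ZMod 7} (h : a ≠ b) : e a * e b * e a = e b := by
  rw [e_mul_e_of_ne h, smul_mul_assoc, e_mul_e_anticomm (idx_ne_left h), smul_neg,
    ← mul_smul_comm, ← e_mul_e_of_ne h, e_mul_e_mul_e_same_left, neg_neg]

lemma e_mul_e_mul_e_swap {i j k : ZMod 7} (hij : i ≠ j) (hki : k ≠ i) (hkj : k ≠ j)
    (hkij : k ≠ idx i j) : e i * e j * e k = -(e i * e k * e j) := by
  rw [e_mul_e_of_ne hij, e_mul_e_of_ne hki.symm, smul_mul_assoc, smul_mul_assoc,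
    e_mul_e_of_ne hkij.symm, e_mul_e_of_ne (idx_ne_of_not_mem_line hij hki hkj hkij),
    idx_idx_swap hij hki hkj hkij, smul_smul, smul_smul, ← Int.cast_mul, ← Int.cast_mul,
    mulSign_mul_mulSign_swap hij hki hkj hkij, Int.cast_neg, neg_smul]

lemma e_mul_e_mem_Qline (a b : ZMod 7) : e a * e b ∈ Qline a b := by
  obtain rfl | h := eq_or_ne a b
  · rw [e_mul_self]
    exact neg_mem (Submodule.subset_span (by simp))
  · rw [e_mul_e_of_ne h]
    exact Submodule.smul_mem _ _ (Submodule.subset_span (by simp))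

lemma one_mem_Qline (a b : ZMod 7) : 1 ∈ Qline a b := Submodule.subset_span (by simp)
lemma e_left_mem_Qline (a b : ZMod 7) : e a ∈ Qline a b := Submodule.subset_span (by simp)
lemma e_right_mem_Qline (a b : ZMod 7) : e b ∈ Qline a b := Submodule.subset_span (by simp)

lemma Oct.linearMap_ext_frame {i j k : ZMod 7} (hij : i ≠ j) (hki : k ≠ i) (hkj : k ≠ j)
    (hkij : k ≠ idx i j) {M N : Oct →ₗ[ℝ] Oct} (h1 : M 1 = N 1) (hi : M (e i) = N (e i))
    (hj : M (e j) = N (e j)) (hij' : M (e i * e j) = N (e i * e j)) (hk : M (e k) = N (e k))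
    (hik : M (e i * e k) = N (e i * e k)) (hjk : M (e j * e k) = N (e j * e k))
    (hijk : M (e i * e j * e k) = N (e i * e j * e k)) : M = N := by
  refine Oct.linearMap_ext h1 fun a => ?_
  rcases eq_or_eq_of_not_mem_line hij hki hkj hkij a with
    rfl | rfl | rfl | rfl | rfl | rfl | rfl
  · exact hi
  · exact hj
  · rw [e_idx hij, map_smul, map_smul, hij']
  · exact hk
  · rw [e_idx hki.symm, map_smul, map_smul, hik]
  · rw [e_idx hkj.symm, map_smul, map_smul, hjk]
  · rw [e_idx hkij.symm, e_idx hij, smul_mul_assoc, map_smul, map_smul, map_smul, map_smul, hijk]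

namespace isE

variable {a b c : ZMod 7} {E : Oct →ₗ[ℝ] Oct}

lemma apply_of_mem {Q : Submodule ℝ Oct} (hE : isE a c Q E) {q : Oct} (hq : q ∈ Q) : E q = 0 :=
  (hE q hq).1

lemma apply_e (hE : isE a c (Qline a b) E) : E (e c) = (1/2 : ℝ) • (e a * e c) := by
  simpa only [one_mul, mul_one] using (hE 1 (one_mem_Qline a b)).2

lemma apply_e_left_mul_e (hE : isE a c (Qline a b) E) :
    E (e a * e c) = -((1/2 : ℝ) • e c) := by
  simpa only [e_mul_self, neg_mul, one_mul, smul_neg] using (hE (e a) (e_left_mem_Qline a b)).2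

lemma apply_e_right_mul_e (hE : isE a c (Qline a b) E) :
    E (e b * e c) = (1/2 : ℝ) • (e a * e b * e c) :=
  (hE (e b) (e_right_mem_Qline a b)).2

lemma apply_e_mul_e_mul_e (hE : isE a c (Qline a b) E) :
    E (e a * e b * e c) = -((1/2 : ℝ) • (e b * e c)) := by
  simpa only [e_mul_e_mul_e_same_left, neg_mul, smul_neg] using
    (hE (e a * e b) (e_mul_e_mem_Qline a b)).2

end isE

namespace isF

variable {a b c : ZMod 7} {F : Oct →ₗ[ℝ] Oct}

lemma apply_one (hF : isF a c (Qline a b) F) : F 1 = 0 := by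
  simpa only [one_mul, mul_one, sub_self, smul_zero] using (hF 1 (one_mem_Qline a b)).1

lemma apply_e_left (hF : isF a c (Qline a b) F) : F (e a) = 0 := by
  simpa only [sub_self, smul_zero] using (hF (e a) (e_left_mem_Qline a b)).1

lemma apply_e_right (hF : isF a c (Qline a b) F) (hab : a ≠ b) : F (e b) = e a * e b := by
  rw [(hF (e b) (e_right_mem_Qline a b)).1, e_mul_e_anticomm hab.symm, sub_neg_eq_add]
  module

lemma apply_e_left_mul_e_right (hF : isF a c (Qline a b) F) (hab : a ≠ b) :
    F (e a * e b) = -e b := by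
  rw [(hF (e a * e b) (e_mul_e_mem_Qline a b)).1, e_mul_e_mul_e_same_left,
    e_mul_e_mul_e_same_outer hab]
  module

lemma apply_e (hF : isF a c (Qline a b) F) : F (e c) = -((1/2 : ℝ) • (e a * e c)) := by
  simpa only [one_mul] using (hF 1 (one_mem_Qline a b)).2

lemma apply_e_left_mul_e (hF : isF a c (Qline a b) F) : F (e a * e c) = (1/2 : ℝ) • e c := by
  simpa only [e_mul_self, neg_mul, one_mul, smul_neg, neg_neg] using
    (hF (e a) (e_left_mem_Qline a b)).2

lemma apply_e_right_mul_e (hF : isF a c (Qline a b) F) (hab : a ≠ b) :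
    F (e b * e c) = (1/2 : ℝ) • (e a * e b * e c) := by
  rw [(hF (e b) (e_right_mem_Qline a b)).2, e_mul_e_anticomm hab.symm, neg_mul, smul_neg,
    neg_neg]

lemma apply_e_mul_e_mul_e (hF : isF a c (Qline a b) F) (hab : a ≠ b) :
    F (e a * e b * e c) = -((1/2 : ℝ) • (e b * e c)) := by
  simpa only [e_mul_e_mul_e_same_outer hab] using (hF (e a * e b) (e_mul_e_mem_Qline a b)).2

end isF

section ChangeOfLine

variable {i j k : ZMod 7} {E₁ F₁ E₂ F₂ : Oct →ₗ[ℝ] Oct}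

lemma isE_eq_half_add (hij : i ≠ j) (hki : k ≠ i) (hkj : k ≠ j) (hkij : k ≠ idx i j)
    (hE₁ : isE i k (Qline i j) E₁) (hE₂ : isE i j (Qline i k) E₂)
    (hF₂ : isF i j (Qline i k) F₂) : E₁ = (1/2 : ℝ) • (E₂ + F₂) := by
  refine Oct.linearMap_ext_frame hij hki hkj hkij ?_ ?_ ?_ ?_ ?_ ?_ ?_ ?_ <;>
    simp only [LinearMap.smul_apply, LinearMap.add_apply]
  · rw [hE₁.apply_of_mem (one_mem_Qline i j), hE₂.apply_of_mem (one_mem_Qline i k),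
      hF₂.apply_one, add_zero, smul_zero]
  · rw [hE₁.apply_of_mem (e_left_mem_Qline i j), hE₂.apply_of_mem (e_left_mem_Qline i k),
      hF₂.apply_e_left, add_zero, smul_zero]
  · rw [hE₁.apply_of_mem (e_right_mem_Qline i j), hE₂.apply_e, hF₂.apply_e]
    module
  · rw [hE₁.apply_of_mem (e_mul_e_mem_Qline i j), hE₂.apply_e_left_mul_e,
      hF₂.apply_e_left_mul_e]
    module
  · rw [hE₁.apply_e, hE₂.apply_of_mem (e_right_mem_Qline i k), hF₂.apply_e_right hki.symm]
    module
  · rw [hE₁.apply_e_left_mul_e, hE₂.apply_of_mem (e_mul_e_mem_Qline i k),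
      hF₂.apply_e_left_mul_e_right hki.symm]
    module
  · rw [hE₁.apply_e_right_mul_e, e_mul_e_anticomm hkj.symm, map_neg, map_neg,
      hE₂.apply_e_right_mul_e, hF₂.apply_e_right_mul_e hki.symm,
      e_mul_e_mul_e_swap hij hki hkj hkij]
    module
  · rw [hE₁.apply_e_mul_e_mul_e, e_mul_e_mul_e_swap hij hki hkj hkij, map_neg, map_neg,
      hE₂.apply_e_mul_e_mul_e, hF₂.apply_e_mul_e_mul_e hki.symm, e_mul_e_anticomm hkj.symm]
    module

lemma isF_eq_half_three_smul_sub (hij : i ≠ j) (hki : k ≠ i) (hkj : k ≠ j)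
    (hkij : k ≠ idx i j)
    (hF₁ : isF i k (Qline i j) F₁) (hE₂ : isE i j (Qline i k) E₂)
    (hF₂ : isF i j (Qline i k) F₂) : F₁ = (1/2 : ℝ) • ((3 : ℝ) • E₂ - F₂) := by
  refine Oct.linearMap_ext_frame hij hki hkj hkij ?_ ?_ ?_ ?_ ?_ ?_ ?_ ?_ <;>
    simp only [LinearMap.smul_apply, LinearMap.sub_apply]
  · rw [hF₁.apply_one, hE₂.apply_of_mem (one_mem_Qline i k), hF₂.apply_one]
    module
  · rw [hF₁.apply_e_left, hE₂.apply_of_mem (e_left_mem_Qline i k), hF₂.apply_e_left]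
    module
  · rw [hF₁.apply_e_right hij, hE₂.apply_e, hF₂.apply_e]
    module
  · rw [hF₁.apply_e_left_mul_e_right hij, hE₂.apply_e_left_mul_e, hF₂.apply_e_left_mul_e]
    module
  · rw [hF₁.apply_e, hE₂.apply_of_mem (e_right_mem_Qline i k), hF₂.apply_e_right hki.symm]
    module
  · rw [hF₁.apply_e_left_mul_e, hE₂.apply_of_mem (e_mul_e_mem_Qline i k),
      hF₂.apply_e_left_mul_e_right hki.symm]
    module
  · rw [hF₁.apply_e_right_mul_e hij, e_mul_e_anticomm hkj.symm, map_neg, map_neg,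
      hE₂.apply_e_right_mul_e, hF₂.apply_e_right_mul_e hki.symm,
      e_mul_e_mul_e_swap hij hki hkj hkij]
    module
  · rw [hF₁.apply_e_mul_e_mul_e hij, e_mul_e_mul_e_swap hij hki hkj hkij, map_neg, map_neg,
      hE₂.apply_e_mul_e_mul_e, hF₂.apply_e_mul_e_mul_e hki.symm, e_mul_e_anticomm hkj.symm]
    module

end ChangeOfLine

/-- Lemma 2.2(a): if `ℓ = {i, j, i*j}` and `ℓ' = {i, k, i*k}` are
distinct Fano lines through `i`, then `E_i^{ℓ,k} = (1/2)(E_i^{ℓ',j} + F_i^{ℓ'})`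
and `F_i^ℓ = (1/2)(3E_i^{ℓ',j} − F_i^{ℓ'})`, i.e.
`(E_i^{ℓ,k}, F_i^ℓ) = P·(E_i^{ℓ',j}, F_i^{ℓ'})` with `P = (1/2)[[1,1],[3,−1]]`. -/
theorem stmt10 : ∀ i j k : ZMod 7, i ≠ j →
    k ∉ ({i, j, idx i j} : Set (ZMod 7)) →
    ∀ E₁ F₁ E₂ F₂ : Oct →ₗ[ℝ] Oct,
      isE i k (Qline i j) E₁ → isF i k (Qline i j) F₁ →
      isE i j (Qline i k) E₂ → isF i j (Qline i k) F₂ →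
      E₁ = (1/2 : ℝ) • (E₂ + F₂) ∧ F₁ = (1/2 : ℝ) • ((3 : ℝ) • E₂ - F₂) := by
  intro i j k hij hk E₁ F₁ E₂ F₂ hE₁ hF₁ hE₂ hF₂
  simp only [Set.mem_insert_iff, Set.mem_singleton_iff, not_or] at hk
  obtain ⟨hki, hkj, hkij⟩ := hk
  exact ⟨isE_eq_half_add hij hki hkj hkij hE₁ hE₂ hF₂,
    isF_eq_half_three_smul_sub hij hki hkj hkij hF₁ hE₂ hF₂⟩
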